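/- Let τ > 0, δ ∈ (0,1/2), C₂ > 0, a₁, a₂ ∈ ℝ, κ₁ ≥ 0, κ₂ > 0, and let M be the operator (Mf)(x,y) = −(1/τ)(x²−y²−a₁)∂_x f − (1/τ)(2xy − a₂)∂_y f + (κ₁/τ)∂_x² f + (κ₂/τ)∂_y² f. Define φ₂(x,y) = C₂(−x + |y|^{δ/2}) on X₂ = {(x,y) : −2 ≤ x ≤ 2, |y| ≥ 2^{2/δ}}. Then φ₂ ≥ 0 on X₂, φ₂ → ∞ as |y| → ∞ in X₂, and Mφ₂ → −∞ as |y| → ∞ in X₂; in fact there is a constant c > 0 such that for |y| sufficiently large in X₂, τ(Mφ₂)(x,y) ≤ −c y². -/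

import Mathlib

/-- Partial derivative in `x` of a function of two real variables. -/
noncomputable def pdx (f : ℝ → ℝ → ℝ) (x y : ℝ) : ℝ := deriv (fun x' => f x' y) x

/-- Partial derivative in `y` of a function of two real variables. -/
noncomputable def pdy (f : ℝ → ℝ → ℝ) (x y : ℝ) : ℝ := deriv (fun y' => f x y') y

/-- The generator `M` of the planar diffusion, in real coordinates. -/
noncomputable def Mop (τ a₁ a₂ κ₁ κ₂ : ℝ) (f : ℝ → ℝ → ℝ) (x y : ℝ) : ℝ :=
  -(1 / τ) * (x ^ 2 - y ^ 2 - a₁) * pdx f x y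
    - (1 / τ) * (2 * x * y - a₂) * pdy f x y
    + (κ₁ / τ) * pdx (fun x' y' => pdx f x' y') x y
    + (κ₂ / τ) * pdy (fun x' y' => pdy f x' y') x y

/-!
Since `φ₂` is affine in `x`, only the two drift terms and the `y`-diffusion contribute to `Mφ₂`.
With `r = δ/2`, the `x`-drift gives `C₂(x² - y² - a₁) ≤ C₂(4 + |a₁| - y²)`; the `y`-drift is
`C₂ r (2xy - a₂) y |y|^(r-2)`, of size at most `4|y| + |a₂|` because `|y|^(r-1) ≤ 1` for
`|y| ≥ 1`; and the diffusion term `κ₂ C₂ r (r - 1) |y|^(r-2)` is negative because `r < 1`.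
So `τ Mφ₂ ≤ -C₂ y² / 2` once `|y|` is large, and the lower bound `|y|^r ≥ 2` on `X₂` gives `φ₂ ≥ 0`.
-/

theorem hasDerivAt_abs_rpow_of_ne_zero (p : ℝ) {t : ℝ} (ht : t ≠ 0) :
    HasDerivAt (fun t : ℝ => |t| ^ p) (p * |t| ^ (p - 2) * t) t := by
  convert (hasDerivAt_abs ht).rpow_const (p := p) (Or.inl (abs_ne_zero.2 ht)) using 1
  rw [show p - 1 = p - 2 + 1 by ring, Real.rpow_add_one (abs_ne_zero.2 ht)]
  linear_combination (-(p * |t| ^ (p - 2))) * abs_mul_sign t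

theorem hasDerivAt_mul_abs_rpow (s : ℝ) {t : ℝ} (ht : t ≠ 0) :
    HasDerivAt (fun t : ℝ => t * |t| ^ s) ((s + 1) * |t| ^ s) t := by
  refine ((hasDerivAt_id t).mul (hasDerivAt_abs_rpow_of_ne_zero s ht)).congr_deriv ?_
  rw [show s = s - 2 + 2 by ring, Real.rpow_add (abs_pos.2 ht), Real.rpow_two, sq_abs]
  simp only [id, add_sub_cancel_right]
  ring

noncomputable def lyap₂ (C r x y : ℝ) : ℝ := C * (-x + |y| ^ r)

section lyap₂
variable {C r x y : ℝ}

theorem pdx_lyap₂ : pdx (lyap₂ C r) x y = -C := by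
  simp [pdx, lyap₂]

theorem pdx_pdx_lyap₂ : pdx (fun x y => pdx (lyap₂ C r) x y) x y = 0 := by
  simp only [pdx_lyap₂]
  simp [pdx]

theorem pdy_lyap₂ (hy : y ≠ 0) : pdy (lyap₂ C r) x y = C * (r * |y| ^ (r - 2) * y) :=
  ((hasDerivAt_abs_rpow_of_ne_zero r hy).const_add (-x)).const_mul C |>.deriv

theorem pdy_pdy_lyap₂ (hy : y ≠ 0) :
    pdy (fun x y => pdy (lyap₂ C r) x y) x y = C * r * (r - 1) * |y| ^ (r - 2) := by
  have h := (hasDerivAt_mul_abs_rpow (r - 2) hy).const_mul (C * r)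
  refine (h.congr_of_eventuallyEq ?_).deriv.trans (by ring)
  filter_upwards [eventually_ne_nhds hy] with t ht
  rw [pdy_lyap₂ ht]
  ring

theorem mul_Mop_lyap₂ {τ : ℝ} (hτ : τ ≠ 0) (a₁ a₂ κ₁ κ₂ : ℝ) (hy : y ≠ 0) :
    τ * Mop τ a₁ a₂ κ₁ κ₂ (lyap₂ C r) x y =
      C * (x ^ 2 - y ^ 2 - a₁) - C * r * (2 * x * y - a₂) * (|y| ^ (r - 2) * y)
        + κ₂ * C * r * (r - 1) * |y| ^ (r - 2) := by
  rw [Mop, pdx_lyap₂, pdx_pdx_lyap₂, pdy_lyap₂ hy, pdy_pdy_lyap₂ hy]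
  field_simp
  ring

theorem mul_Mop_lyap₂_le {τ : ℝ} (hτ : τ ≠ 0) (a₁ a₂ κ₁ : ℝ) {κ₂ : ℝ} (hC : 0 ≤ C)
    (hr₀ : 0 ≤ r) (hr₁ : r ≤ 1) (hκ₂ : 0 ≤ κ₂) (hx : |x| ≤ 2) (hy : 1 ≤ |y|) :
    τ * Mop τ a₁ a₂ κ₁ κ₂ (lyap₂ C r) x y ≤ C * (4 + |a₁| + |a₂| + 4 * |y| - y ^ 2) := by
  have hy₀ : y ≠ 0 := abs_pos.1 (by linarith)
  have hdecay : |(|y| ^ (r - 2) * y)| ≤ 1 := by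
    rw [abs_mul, abs_of_nonneg (Real.rpow_nonneg (abs_nonneg y) _),
      ← Real.rpow_add_one (abs_pos.2 hy₀).ne', show r - 2 + 1 = r - 1 by ring]
    exact Real.rpow_le_one_of_one_le_of_nonpos hy (by linarith)
  have hydrift : -(r * (2 * x * y - a₂) * (|y| ^ (r - 2) * y)) ≤ 4 * |y| + |a₂| :=
    calc -(r * (2 * x * y - a₂) * (|y| ^ (r - 2) * y))
        ≤ |r * (2 * x * y - a₂) * (|y| ^ (r - 2) * y)| := neg_le_abs _
      _ = r * |2 * x * y - a₂| * |(|y| ^ (r - 2) * y)| := by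
          rw [abs_mul, abs_mul, abs_of_nonneg hr₀]
      _ ≤ 1 * (|2 * x * y| + |a₂|) * 1 := by gcongr; exact abs_sub _ _
      _ ≤ 4 * |y| + |a₂| := by
          rw [abs_mul, abs_mul, abs_two]; nlinarith [abs_nonneg y]
  have hdiffusion : κ₂ * C * r * (r - 1) * |y| ^ (r - 2) ≤ 0 :=
    mul_nonpos_of_nonpos_of_nonneg
      (mul_nonpos_of_nonneg_of_nonpos (by positivity) (by linarith)) (by positivity)
  have hxdrift : x ^ 2 - y ^ 2 - a₁ ≤ 4 - y ^ 2 + |a₁| := by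
    nlinarith [sq_abs x, abs_nonneg x, neg_le_abs a₁]
  rw [mul_Mop_lyap₂ hτ a₁ a₂ κ₁ κ₂ hy₀]
  nlinarith [mul_le_mul_of_nonneg_left hydrift hC, mul_le_mul_of_nonneg_left hxdrift hC]

theorem exists_mul_Mop_lyap₂_le_neg_mul_sq {τ : ℝ} (hτ : τ ≠ 0) (a₁ a₂ κ₁ : ℝ) {κ₂ : ℝ}
    (hC : 0 < C) (hr₀ : 0 ≤ r) (hr₁ : r ≤ 1) (hκ₂ : 0 ≤ κ₂) :
    ∃ c : ℝ, 0 < c ∧ ∃ Y : ℝ, ∀ x y : ℝ, -2 ≤ x → x ≤ 2 → Y ≤ |y| →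
      τ * Mop τ a₁ a₂ κ₁ κ₂ (lyap₂ C r) x y ≤ -c * y ^ 2 := by
  refine ⟨C / 2, by positivity, |a₁| + |a₂| + 10, fun x y hx₁ hx₂ hy => ?_⟩
  have ha : 0 ≤ |a₁| + |a₂| := by positivity
  have hM := mul_Mop_lyap₂_le hτ a₁ a₂ κ₁ hC.le hr₀ hr₁ hκ₂ (abs_le.2 ⟨hx₁, hx₂⟩) (by linarith)
  have hq : 4 + |a₁| + |a₂| + 4 * |y| - y ^ 2 ≤ -(y ^ 2 / 2) := by
    nlinarith [sq_abs y]
  nlinarith [mul_le_mul_of_nonneg_left hq hC.le]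

theorem lyap₂_nonneg {δ : ℝ} (hC : 0 ≤ C) (hδ : 0 < δ) (hx : x ≤ 2)
    (hy : (2 : ℝ) ^ (2 / δ) ≤ |y|) : 0 ≤ lyap₂ C (δ / 2) x y := by
  have h : (2 : ℝ) ≤ |y| ^ (δ / 2) :=
    calc (2 : ℝ) = ((2 : ℝ) ^ (2 / δ)) ^ (δ / 2) := by
          rw [← Real.rpow_mul zero_le_two, show 2 / δ * (δ / 2) = 1 by field_simp, Real.rpow_one]
      _ ≤ |y| ^ (δ / 2) := by gcongr
  unfold lyap₂
  nlinarith

theorem exists_le_lyap₂ (hC : 0 < C) (hr : 0 < r) (K : ℝ) :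
    ∃ Y : ℝ, ∀ x y : ℝ, x ≤ 2 → Y ≤ |y| → K ≤ lyap₂ C r x y := by
  obtain ⟨Y, hY⟩ :=
    Filter.eventually_atTop.1 ((tendsto_rpow_atTop hr).eventually_ge_atTop (K / C + 2))
  refine ⟨Y, fun x y hx hy => ?_⟩
  rw [lyap₂, ← div_le_iff₀' hC]
  linarith [hY _ hy]

end lyap₂

theorem exists_le_of_mul_le_neg_mul_sq {τ c : ℝ} (hτ : 0 < τ) (hc : 0 < c) (K : ℝ) :
    ∃ Y : ℝ, ∀ m y : ℝ, Y ≤ |y| → τ * m ≤ -c * y ^ 2 → m ≤ K := by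
  obtain ⟨Y, hY⟩ :=
    Filter.eventually_atTop.1
      ((Filter.tendsto_pow_atTop two_ne_zero).eventually_ge_atTop (τ * |K| / c))
  refine ⟨Y, fun m y hy hm => le_of_mul_le_mul_left ?_ hτ⟩
  have hy2 : τ * |K| ≤ c * y ^ 2 := by
    rw [← div_le_iff₀' hc, ← sq_abs]
    exact hY _ hy
  nlinarith [neg_abs_le K]

theorem LF2_general (τ δ C₂ a₁ a₂ κ₁ κ₂ : ℝ) (hτ : 0 < τ)
    (hδ : δ ∈ Set.Ioo (0 : ℝ) (1 / 2)) (hC : 0 < C₂)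
    (hκ₂ : 0 < κ₂)
    (φ₂ : ℝ → ℝ → ℝ)
    (hφ : ∀ x y, φ₂ x y = C₂ * (-x + |y| ^ (δ / 2 : ℝ))) :
    (∀ x y : ℝ, -2 ≤ x → x ≤ 2 → (2 : ℝ) ^ (2 / δ : ℝ) ≤ |y| → 0 ≤ φ₂ x y) ∧
    (∀ K : ℝ, ∃ Y : ℝ, ∀ x y : ℝ, -2 ≤ x → x ≤ 2 → (2 : ℝ) ^ (2 / δ : ℝ) ≤ |y| →
      Y ≤ |y| → K ≤ φ₂ x y) ∧
    (∀ K : ℝ, ∃ Y : ℝ, ∀ x y : ℝ, -2 ≤ x → x ≤ 2 → (2 : ℝ) ^ (2 / δ : ℝ) ≤ |y| →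
      Y ≤ |y| → Mop τ a₁ a₂ κ₁ κ₂ φ₂ x y ≤ K) ∧
    (∃ c : ℝ, 0 < c ∧ ∃ Y : ℝ, ∀ x y : ℝ, -2 ≤ x → x ≤ 2 →
      (2 : ℝ) ^ (2 / δ : ℝ) ≤ |y| → Y ≤ |y| →
      τ * Mop τ a₁ a₂ κ₁ κ₂ φ₂ x y ≤ -c * y ^ 2) := by
  obtain ⟨hδ₀, hδ₁⟩ := hδ
  obtain rfl : φ₂ = lyap₂ C₂ (δ / 2) := funext₂ hφ
  obtain ⟨c, hc, Y, hY⟩ := exists_mul_Mop_lyap₂_le_neg_mul_sq (r := δ / 2) hτ.ne' a₁ a₂ κ₁ hC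
    (by positivity) (by linarith) hκ₂.le
  refine ⟨fun x y _ hx hy => lyap₂_nonneg hC.le hδ₀ hx hy, fun K => ?_, fun K => ?_,
    c, hc, Y, fun x y hx₁ hx₂ _ => hY x y hx₁ hx₂⟩
  · obtain ⟨Y', hY'⟩ := exists_le_lyap₂ (r := δ / 2) hC (by positivity) K
    exact ⟨Y', fun x y _ hx _ => hY' x y hx⟩
  · obtain ⟨Y', hY'⟩ := exists_le_of_mul_le_neg_mul_sq hτ hc K
    exact ⟨max Y Y', fun x y hx₁ hx₂ _ hy =>
      hY' _ y (le_of_max_le_right hy) (hY x y hx₁ hx₂ (le_of_max_le_left hy))⟩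

/-- the Lyapunov function `φ₂(x,y) = C₂(−x + |y|^{δ/2})` on
`X₂ = {−2 ≤ x ≤ 2, |y| ≥ 2^{2/δ}}`: nonnegative, tends to `∞` as `|y| → ∞`
in `X₂`, and `τ Mφ₂ ≤ −c y²` for `|y|` large in `X₂`; in particular
`Mφ₂ → −∞` as `|y| → ∞` in `X₂`. -/
theorem LF2 (τ δ C₂ a₁ a₂ κ₁ κ₂ : ℝ) (hτ : 0 < τ)
    (hδ : δ ∈ Set.Ioo (0 : ℝ) (1 / 2)) (hC : 0 < C₂)
    (hκ₁ : 0 ≤ κ₁) (hκ₂ : 0 < κ₂)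
    (φ₂ : ℝ → ℝ → ℝ)
    (hφ : ∀ x y, φ₂ x y = C₂ * (-x + |y| ^ (δ / 2 : ℝ))) :
    (∀ x y : ℝ, -2 ≤ x → x ≤ 2 → (2 : ℝ) ^ (2 / δ : ℝ) ≤ |y| → 0 ≤ φ₂ x y) ∧
    (∀ K : ℝ, ∃ Y : ℝ, ∀ x y : ℝ, -2 ≤ x → x ≤ 2 → (2 : ℝ) ^ (2 / δ : ℝ) ≤ |y| →
      Y ≤ |y| → K ≤ φ₂ x y) ∧
    (∀ K : ℝ, ∃ Y : ℝ, ∀ x y : ℝ, -2 ≤ x → x ≤ 2 → (2 : ℝ) ^ (2 / δ : ℝ) ≤ |y| →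
      Y ≤ |y| → Mop τ a₁ a₂ κ₁ κ₂ φ₂ x y ≤ K) ∧
    (∃ c : ℝ, 0 < c ∧ ∃ Y : ℝ, ∀ x y : ℝ, -2 ≤ x → x ≤ 2 →
      (2 : ℝ) ^ (2 / δ : ℝ) ≤ |y| → Y ≤ |y| →
      τ * Mop τ a₁ a₂ κ₁ κ₂ φ₂ x y ≤ -c * y ^ 2) :=
  LF2_general τ δ C₂ a₁ a₂ κ₁ κ₂ hτ hδ hC hκ₂ φ₂ hφ
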